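/- arXiv:1112.6172 — 2 statements merged into one kernel-verified Lean document; each statement's English description precedes it below -/
import Mathlib

section
/- For every two finite simple graphs G and H, the independence ratio of the categorical product satisfies i(G × H) ≤ max{a(G), a(H)}, where i(K) = α(K)/|V(K)| and a(K) = max{|U|/(|U| + |N_K(U)|) : U a nonempty independent set of K}. -/
open scoped Classical
open Filter

/-- Categorical (tensor) product of two simple graphs. -/
def tensorProd {α β : Type*} (G : SimpleGraph α) (H : SimpleGraph β) :
    SimpleGraph (α × β) where
  Adj p q := G.Adj p.1 q.1 ∧ H.Adj p.2 q.2
  symm := ⟨fun p q h => ⟨h.1.symm, h.2.symm⟩⟩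
  loopless := ⟨fun p h => G.irrefl h.1⟩

/-- A finset is independent. -/
def IsIndep {α : Type*} (G : SimpleGraph α) (U : Finset α) : Prop :=
  ∀ u ∈ U, ∀ v ∈ U, ¬ G.Adj u v

/-- Neighborhood of a finset. -/
noncomputable def nbhd {α : Type*} [Fintype α] (G : SimpleGraph α) (U : Finset α) : Finset α :=
  Finset.univ.filter (fun v => ∃ u ∈ U, G.Adj u v)

/-- Independence number. -/
noncomputable def alphaNum {α : Type*} [Fintype α] (G : SimpleGraph α) : ℕ :=
  sSup {n : ℕ | ∃ U : Finset α, IsIndep G U ∧ U.card = n}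

/-- Independence ratio. -/
noncomputable def iRatio {α : Type*} [Fintype α] (G : SimpleGraph α) : ℝ :=
  (alphaNum G : ℝ) / (Fintype.card α : ℝ)

/-- a(G): the maximum of |U|/(|U|+|N(U)|) over nonempty independent sets. -/
noncomputable def aRatio {α : Type*} [Fintype α] (G : SimpleGraph α) : ℝ :=
  sSup {r : ℝ | ∃ U : Finset α, U.Nonempty ∧ IsIndep G U ∧
    r = (U.card : ℝ) / ((U.card : ℝ) + ((nbhd G U).card : ℝ))}

/-- b(G): the minimum of |N(U)|/|U| over nonempty independent sets. -/
noncomputable def bRatio {α : Type*} [Fintype α] (G : SimpleGraph α) : ℝ :=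
  sInf {r : ℝ | ∃ U : Finset α, U.Nonempty ∧ IsIndep G U ∧
    r = ((nbhd G U).card : ℝ) / (U.card : ℝ)}

/-- a*(G). -/
noncomputable def aStar {α : Type*} [Fintype α] (G : SimpleGraph α) : ℝ :=
  if aRatio G ≤ 1/2 then aRatio G else 1

/-- k-th categorical power of G. -/
def tensorPow {α : Type*} (G : SimpleGraph α) (k : ℕ) : SimpleGraph (Fin k → α) where
  Adj x y := x ≠ y ∧ ∀ i, G.Adj (x i) (y i)
  symm := ⟨fun x y h => ⟨h.1.symm, fun i => (h.2 i).symm⟩⟩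
  loopless := ⟨fun x h => h.1 rfl⟩

/-- Disjoint union of two simple graphs. -/
def disjUnion {α β : Type*} (G : SimpleGraph α) (H : SimpleGraph β) :
    SimpleGraph (α ⊕ β) where
  Adj p q := match p, q with
    | Sum.inl a, Sum.inl b => G.Adj a b
    | Sum.inr a, Sum.inr b => H.Adj a b
    | _, _ => False
  symm := ⟨by rintro (a|a) (b|b) h <;> simp_all <;> exact h.symm⟩
  loopless := ⟨by rintro (a|a) h <;> simp_all⟩

/-!
Let `t = max (a G) (a H)`, so that `(1 - t) |U| ≤ t |N(U)|` for every independent `U` of either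
factor. Let `K` be independent in `G × H` with columns `K_x ⊆ V(H)`, and split each `K_x` into the
vertices with a neighbour in `K_x` and the isolated ones, `I_x`. For fixed `y`, the set
`T(y) = {x | y has a neighbour in K_x}` is independent in `G`, and `N_G(T(y))` avoids
`P(y) = {x | y ∈ N[K_x]}`; hence `(1 - t) |T(y)| + t |P(y)| ≤ t |G|`. For fixed `x`, `I_x` is
independent in `H` and `N_H(I_x) ⊆ N[K_x] \ K_x`; hence `(1 - t) |I_x| + t |K_x| ≤ t |N[K_x]|`.
Summing the first bound over `y` and the second over `x`, the terms `t ∑ |N[K_x]|` cancel and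
`|K| ≤ t |G| |H|`.
-/

open Finset

section Neighborhood

variable {γ : Type*} (G : SimpleGraph γ)

noncomputable def isolatedIn (s : Finset γ) : Finset γ := {y ∈ s | ¬ ∃ z ∈ s, G.Adj y z}

noncomputable def nonisolatedIn (s : Finset γ) : Finset γ := {y ∈ s | ∃ z ∈ s, G.Adj y z}

lemma card_nonisolatedIn_add_card_isolatedIn (s : Finset γ) :
    #(nonisolatedIn G s) + #(isolatedIn G s) = #s :=
  card_filter_add_card_filter_not _

lemma isIndep_isolatedIn (s : Finset γ) : IsIndep G (isolatedIn G s) := by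
  intro u hu v hv huv
  simp only [isolatedIn, mem_filter] at hu hv
  exact hu.2 ⟨v, hv.1, huv⟩

variable [Fintype γ]

noncomputable def closedNbhd (s : Finset γ) : Finset γ := s ∪ nbhd G s

lemma mem_nbhd {U : Finset γ} {v : γ} : v ∈ nbhd G U ↔ ∃ u ∈ U, G.Adj u v := by
  simp [nbhd]

lemma nbhd_mono {U V : Finset γ} (h : U ⊆ V) : nbhd G U ⊆ nbhd G V := by
  intro v hv
  obtain ⟨u, hu, huv⟩ := (mem_nbhd G).1 hv
  exact (mem_nbhd G).2 ⟨u, h hu, huv⟩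

lemma aRatio_nonneg : 0 ≤ aRatio G :=
  Real.sSup_nonneg <| by rintro _ ⟨U, -, -, rfl⟩; positivity

lemma one_sub_mul_card_le_mul_card_nbhd {t : ℝ} (ht : aRatio G ≤ t) {U : Finset γ}
    (hU : IsIndep G U) : (1 - t) * #U ≤ t * #(nbhd G U) := by
  rcases U.eq_empty_or_nonempty with rfl | hne
  · simp [nbhd]
  have hbdd : BddAbove {r : ℝ | ∃ U : Finset γ, U.Nonempty ∧ IsIndep G U ∧
      r = (#U : ℝ) / (#U + #(nbhd G U))} := by
    refine ⟨1, ?_⟩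
    rintro _ ⟨V, -, -, rfl⟩
    exact div_le_one_of_le₀ (by simp) (by positivity)
  have hpos : (0 : ℝ) < #U + #(nbhd G U) := by
    have : (0 : ℝ) < #U := by exact_mod_cast hne.card_pos
    positivity
  have hle : (#U : ℝ) / (#U + #(nbhd G U)) ≤ t := (le_csSup hbdd ⟨U, hne, hU, rfl⟩).trans ht
  rw [div_le_iff₀ hpos] at hle
  linarith

lemma exists_isIndep_card_eq_alphaNum : ∃ K : Finset γ, IsIndep G K ∧ #K = alphaNum G :=
  Nat.sSup_mem (s := {n | ∃ K : Finset γ, IsIndep G K ∧ #K = n}) ⟨0, ∅, by simp [IsIndep], rfl⟩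
    ⟨Fintype.card γ, by rintro _ ⟨K, -, rfl⟩; exact card_le_univ K⟩

lemma one_sub_mul_card_isolatedIn_add_le {t : ℝ} (ht : aRatio G ≤ t) (s : Finset γ) :
    (1 - t) * #(isolatedIn G s) + t * #s ≤ t * #(closedNbhd G s) := by
  have ht₀ : 0 ≤ t := (aRatio_nonneg G).trans ht
  have hexp := one_sub_mul_card_le_mul_card_nbhd G ht (isIndep_isolatedIn G s)
  have hdisj : Disjoint s (nbhd G (isolatedIn G s)) := by
    refine disjoint_left.2 fun v hv hvn => ?_
    obtain ⟨u, hu, huv⟩ := (mem_nbhd G).1 hvn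
    exact (mem_filter.1 hu).2 ⟨v, hv, huv⟩
  have hcard : #s + #(nbhd G (isolatedIn G s)) ≤ #(closedNbhd G s) := by
    rw [← card_union_of_disjoint hdisj]
    exact card_le_card (union_subset_union_right (nbhd_mono G (filter_subset _ _)))
  have hcardR : (#s : ℝ) + #(nbhd G (isolatedIn G s)) ≤ #(closedNbhd G s) := by
    exact_mod_cast hcard
  linear_combination hexp + t * hcardR

end Neighborhood

section Product

variable {α β : Type*} [Fintype α] [Fintype β]

noncomputable def column (K : Finset (α × β)) (x : α) : Finset β := {y | (x, y) ∈ K}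

noncomputable def row (f : α → Finset β) (y : β) : Finset α := {x | y ∈ f x}

lemma sum_card_column (K : Finset (α × β)) : ∑ x, #(column K x) = #K := by
  simp only [column, card_filter]
  rw [← sum_product', univ_product_univ, ← card_filter]
  congr 1
  ext p
  simp

lemma sum_card_row (f : α → Finset β) : ∑ y, #(row f y) = ∑ x, #(f x) := by
  simp only [row, card_filter]
  rw [sum_comm]
  simp

variable {G : SimpleGraph α} {H : SimpleGraph β} {K : Finset (α × β)}

lemma isIndep_row_nonisolatedIn (hK : IsIndep (tensorProd G H) K) (y : β) :
    IsIndep G (row (fun x => nonisolatedIn H (column K x)) y) := by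
  intro x₁ hx₁ x₂ hx₂ hadj
  simp only [row, nonisolatedIn, column, mem_filter, mem_univ, true_and] at hx₁ hx₂
  obtain ⟨-, z, hz, hyz⟩ := hx₁
  exact hK (x₁, z) hz (x₂, y) hx₂.1 ⟨hadj, hyz.symm⟩

lemma disjoint_nbhd_row_nonisolatedIn (hK : IsIndep (tensorProd G H) K) (y : β) :
    Disjoint (nbhd G (row (fun x => nonisolatedIn H (column K x)) y))
      (row (fun x => closedNbhd H (column K x)) y) := by
  refine disjoint_left.2 fun x' hx' hx'P => ?_
  obtain ⟨x, hx, hxx'⟩ := (mem_nbhd G).1 hx'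
  simp only [row, nonisolatedIn, column, mem_filter, mem_univ, true_and] at hx
  obtain ⟨hy, z₀, hz₀, hyz₀⟩ := hx
  simp only [row, closedNbhd, column, mem_filter, mem_univ, true_and, mem_union, mem_nbhd] at hx'P
  rcases hx'P with hy' | ⟨z, hz, hzy⟩
  · exact hK (x, z₀) hz₀ (x', y) hy' ⟨hxx', hyz₀.symm⟩
  · exact hK (x, y) hy (x', z) hz ⟨hxx', hzy.symm⟩

lemma one_sub_mul_card_row_add_le (hK : IsIndep (tensorProd G H) K) {t : ℝ}
    (ht : aRatio G ≤ t) (y : β) :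
    (1 - t) * #(row (fun x => nonisolatedIn H (column K x)) y) +
      t * #(row (fun x => closedNbhd H (column K x)) y) ≤ t * Fintype.card α := by
  have ht₀ : 0 ≤ t := (aRatio_nonneg G).trans ht
  have hexp := one_sub_mul_card_le_mul_card_nbhd G ht (isIndep_row_nonisolatedIn hK y)
  have hcard := card_union_of_disjoint (disjoint_nbhd_row_nonisolatedIn hK y) ▸
    card_le_univ (_ ∪ _)
  have hcardR : (#(nbhd G (row (fun x => nonisolatedIn H (column K x)) y)) : ℝ) +
      #(row (fun x => closedNbhd H (column K x)) y) ≤ Fintype.card α := by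
    exact_mod_cast hcard
  linear_combination hexp + t * hcardR

end Product

theorem card_le_of_isIndep_tensorProd {α β : Type*} [Fintype α] [Fintype β]
    {G : SimpleGraph α} {H : SimpleGraph β} {K : Finset (α × β)}
    (hK : IsIndep (tensorProd G H) K) {t : ℝ} (hG : aRatio G ≤ t) (hH : aRatio H ≤ t) :
    (#K : ℝ) ≤ t * Fintype.card α * Fintype.card β := by
  have hrows := sum_le_sum fun y (_ : y ∈ univ) => one_sub_mul_card_row_add_le hK hG y
  have hcols := sum_le_sum fun x (_ : x ∈ univ) =>
    one_sub_mul_card_isolatedIn_add_le H hH (column K x)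
  simp only [sum_add_distrib, ← mul_sum, ← Nat.cast_sum, sum_card_row, sum_const, card_univ,
    nsmul_eq_mul] at hrows hcols
  rw [sum_card_column] at hcols
  push_cast at hrows hcols
  have hsplit : ∑ x, (#(nonisolatedIn H (column K x)) : ℝ) +
      ∑ x, (#(isolatedIn H (column K x)) : ℝ) = #K := by
    rw [← sum_card_column K, ← sum_add_distrib]
    exact_mod_cast sum_congr rfl fun x _ => card_nonisolatedIn_add_card_isolatedIn H (column K x)
  linear_combination hrows + hcols + (t - 1) * hsplit

theorem stmt2_general {α β : Type*} [Fintype α] [Fintype β]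
    (G : SimpleGraph α) (H : SimpleGraph β) :
    iRatio (tensorProd G H) ≤ max (aRatio G) (aRatio H) := by
  obtain ⟨K, hK, hcard⟩ := exists_isIndep_card_eq_alphaNum (tensorProd G H)
  have ht₀ : 0 ≤ max (aRatio G) (aRatio H) := (aRatio_nonneg G).trans (le_max_left _ _)
  refine div_le_of_le_mul₀ (Nat.cast_nonneg _) ht₀ ?_
  rw [← hcard, Fintype.card_prod, Nat.cast_mul, ← mul_assoc]
  exact card_le_of_isIndep_tensorProd hK (le_max_left _ _) (le_max_right _ _)

theorem stmt2 {α β : Type*} [Fintype α] [Fintype β] [Nonempty α] [Nonempty β]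
    (G : SimpleGraph α) (H : SimpleGraph β) :
    iRatio (tensorProd G H) ≤ max (aRatio G) (aRatio H) :=
  stmt2_general G H
end

section
/- For every nonempty finite simple graph G, if a(G) > 1/2 then A(G) = 1, where a(G) = max{|U|/(|U|+|N_G(U)|) : U a nonempty independent set} and A(G) = lim_{k→∞} α(G^{×k})/|V(G)|^k. -/
/-!
Since `a(G) > 1/2`, some nonempty independent set `U` has `|N(U)| < |U|`. In `G^{×k}` the tuples
with more coordinates in `U` than in `N(U)` form an independent set: if `x ~ y` then every
coordinate of `x` in `U` is matched by a coordinate of `y` in `N(U)` and vice versa. By a Chernoff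
bound (weights `r⁻¹` on `U` and `r` on `N(U)` for a suitable `r > 1`) the remaining tuples number
at most `C^k` with `C < |V(G)|`, so `α(G^{×k}) / |V(G)|^k ≥ 1 - (C / |V(G)|)^k → 1`.
-/

open scoped Classical
open Filter

open Finset

section IndependenceNumber

variable {β : Type*} [Fintype β] {H : SimpleGraph β}

lemma bddAbove_indepCards :
    BddAbove {n : ℕ | ∃ S : Finset β, IsIndep H S ∧ S.card = n} :=
  ⟨Fintype.card β, by rintro _ ⟨S, -, rfl⟩; exact S.card_le_univ⟩

lemma card_le_alphaNum {S : Finset β} (hS : IsIndep H S) : S.card ≤ alphaNum H :=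
  le_csSup bddAbove_indepCards ⟨S, hS, rfl⟩

lemma alphaNum_le_card : alphaNum H ≤ Fintype.card β :=
  csSup_le ⟨0, ∅, by simp [IsIndep]⟩ (by rintro _ ⟨S, -, rfl⟩; exact S.card_le_univ)

lemma iRatio_le_one : iRatio H ≤ 1 :=
  div_le_one_of_le₀ (by exact_mod_cast alphaNum_le_card) (Nat.cast_nonneg _)

lemma card_div_card_le_iRatio {S : Finset β} (hS : IsIndep H S) :
    (S.card : ℝ) / Fintype.card β ≤ iRatio H := by
  unfold iRatio
  gcongr
  exact_mod_cast card_le_alphaNum hS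

end IndependenceNumber

section Neighbourhood

variable {α : Type*} [Fintype α] {G : SimpleGraph α} {U : Finset α}

lemma IsIndep.disjoint_nbhd (hU : IsIndep G U) : Disjoint U (nbhd G U) := by
  rw [Finset.disjoint_left]
  intro v hv hv'
  obtain ⟨u, hu, huv⟩ := (mem_filter.1 hv').2
  exact hU u hu v hv huv

lemma exists_card_nbhd_lt_of_half_lt_aRatio (h : 1/2 < aRatio G) :
    ∃ U : Finset α, U.Nonempty ∧ IsIndep G U ∧ (nbhd G U).card < U.card := by
  by_contra! hc
  refine h.not_ge (Real.sSup_le ?_ (by norm_num))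
  rintro _ ⟨U, hU, hUind, rfl⟩
  have hpos : (0 : ℝ) < U.card := by exact_mod_cast hU.card_pos
  have hle : (U.card : ℝ) ≤ (nbhd G U).card := by exact_mod_cast hc U hU hUind
  rw [div_le_iff₀ (by positivity)]
  linarith

end Neighbourhood

noncomputable def coordCount {α : Type*} {k : ℕ} (W : Finset α) (x : Fin k → α) : ℕ :=
  #{i | x i ∈ W}

section MajoritySet

variable {α : Type*} [Fintype α] (G : SimpleGraph α) (U : Finset α) {k : ℕ}

lemma coordCount_le_coordCount_nbhd {x y : Fin k → α} (hxy : ∀ i, G.Adj (x i) (y i)) :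
    coordCount U x ≤ coordCount (nbhd G U) y :=
  card_le_card fun i hi ↦ by
    simp only [nbhd, mem_filter, mem_univ, true_and] at hi ⊢
    exact ⟨x i, hi, hxy i⟩

lemma isIndep_coordCount_nbhd_lt (k : ℕ) :
    IsIndep (tensorPow G k) {x | coordCount (nbhd G U) x < coordCount U x} := by
  rintro x hx y hy ⟨-, hxy⟩
  simp only [mem_filter, mem_univ, true_and] at hx hy
  have := coordCount_le_coordCount_nbhd G U hxy
  have := coordCount_le_coordCount_nbhd G U fun i ↦ (hxy i).symm
  omega

end MajoritySet

section Chernoff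

variable {α : Type*} (U N : Finset α)

noncomputable def signedIndicator (v : α) : ℝ :=
  (if v ∈ N then 1 else 0) - (if v ∈ U then 1 else 0)

lemma sum_signedIndicator {k : ℕ} (x : Fin k → α) :
    ∑ i, signedIndicator U N (x i) = (coordCount N x : ℝ) - coordCount U x := by
  simp only [signedIndicator, sum_sub_distrib, coordCount, natCast_card_filter]

variable [Fintype α]

lemma card_filter_one_le_prod_le_pow_sum (g : α → ℝ) (hg : 0 ≤ g) (k : ℕ) :
    (#{x : Fin k → α | 1 ≤ ∏ i, g (x i)} : ℝ) ≤ (∑ v, g v) ^ k := by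
  set S : Finset (Fin k → α) := {x | 1 ≤ ∏ i, g (x i)}
  rw [Fintype.sum_pow]
  calc (#S : ℝ) = ∑ x ∈ S, 1 := by simp
    _ ≤ ∑ x ∈ S, ∏ i, g (x i) :=
        sum_le_sum fun x hx ↦ (mem_filter.1 hx).2
    _ ≤ ∑ x : Fin k → α, ∏ i, g (x i) :=
        sum_le_sum_of_subset_of_nonneg (filter_subset _ _)
          fun x _ _ ↦ prod_nonneg fun i _ ↦ hg _

lemma sum_rpow_signedIndicator (hUN : Disjoint U N) (r : ℝ) :
    ∑ v, r ^ signedIndicator U N v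
      = Fintype.card α + U.card * (r⁻¹ - 1) + N.card * (r - 1) := by
  have hpoint : ∀ v, r ^ signedIndicator U N v
      = 1 + (if v ∈ U then r⁻¹ - 1 else 0) + (if v ∈ N then r - 1 else 0) := by
    intro v
    by_cases hvU : v ∈ U
    · have hvN : v ∉ N := disjoint_left.1 hUN hvU
      simp [signedIndicator, hvU, hvN, Real.rpow_neg_one]
    · by_cases hvN : v ∈ N <;> simp [signedIndicator, hvU, hvN]
  simp only [hpoint, sum_add_distrib, sum_ite_mem, univ_inter]
  simp
  ring

lemma exists_card_filter_coordCount_le_le_pow (hUN : Disjoint U N) (hcard : N.card < U.card) :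
    ∃ C : ℝ, 0 ≤ C ∧ C < Fintype.card α ∧ ∀ k : ℕ,
      (#{x : Fin k → α | coordCount U x ≤ coordCount N x} : ℝ) ≤ C ^ k := by
  have hwu : (N.card : ℝ) < U.card := by exact_mod_cast hcard
  have hw : (0 : ℝ) ≤ N.card := Nat.cast_nonneg _
  set u : ℝ := (U.card : ℝ)
  set w : ℝ := (N.card : ℝ)
  have hu : u ≠ 0 := (hw.trans_lt hwu).ne'
  set r : ℝ := 2 * u / (u + w)
  have hr : 1 < r := by rw [lt_div_iff₀ (by linarith)]; linarith
  have hweight : ∀ v, 0 ≤ r ^ signedIndicator U N v := fun v ↦ Real.rpow_nonneg (by linarith) _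
  refine ⟨∑ v, r ^ signedIndicator U N v, sum_nonneg fun v _ ↦ hweight v, ?_, fun k ↦ ?_⟩
  · -- `r = 2u / (u + w)` makes the gain `u (1 - r⁻¹) = (u - w) / 2` on `U` beat the loss on `N`
    rw [sum_rpow_signedIndicator U N hUN r]
    have hr_inv : r⁻¹ = (u + w) / (2 * u) := inv_div _ _
    have hgain : u * (r⁻¹ - 1) = -((u - w) / 2) := by
      rw [hr_inv]; field_simp; ring
    have hloss : w * (r - 1) < (u - w) / 2 := by
      rw [div_sub_one (by linarith), mul_div_assoc', div_lt_div_iff₀ (by linarith) two_pos]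
      nlinarith
    linarith
  · refine le_trans ?_ (card_filter_one_le_prod_le_pow_sum _ hweight k)
    gcongr with x
    intro hx
    rw [← Real.rpow_sum_of_pos (by linarith), sum_signedIndicator]
    exact Real.one_le_rpow hr.le (sub_nonneg.2 (by exact_mod_cast hx))

end Chernoff

theorem stmt12_general {α : Type*} [Fintype α] (G : SimpleGraph α)
    (h : 1/2 < aRatio G) :
    Tendsto (fun k : ℕ => iRatio (tensorPow G (k + 1))) atTop (nhds 1) := by
  obtain ⟨U, hU, hUind, hcard⟩ := exists_card_nbhd_lt_of_half_lt_aRatio h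
  obtain ⟨C, hC, hCn, hbad⟩ :=
    exists_card_filter_coordCount_le_le_pow U (nbhd G U) hUind.disjoint_nbhd hcard
  set n : ℝ := (Fintype.card α : ℝ)
  have hn : 0 < n := hC.trans_lt hCn
  have hlow : ∀ k, 1 - (C / n) ^ k ≤ iRatio (tensorPow G k) := by
    intro k
    refine le_trans ?_ (card_div_card_le_iRatio (isIndep_coordCount_nbhd_lt G U k))
    have hsplit := card_filter_add_card_filter_not (s := univ)
      fun x : Fin k → α ↦ coordCount (nbhd G U) x < coordCount U x
    simp only [not_lt, card_univ, Fintype.card_fun, Fintype.card_fin] at hsplit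
    replace hsplit := congrArg (Nat.cast : ℕ → ℝ) hsplit
    push_cast at hsplit
    rw [Fintype.card_fun, Fintype.card_fin, Nat.cast_pow, div_pow, one_sub_div (by positivity)]
    gcongr
    linarith [hbad k]
  have hpow : Tendsto (fun k : ℕ => (C / n) ^ (k + 1)) atTop (nhds 0) :=
    (tendsto_pow_atTop_nhds_zero_of_lt_one (by positivity) ((div_lt_one hn).2 hCn)).comp
      (tendsto_add_atTop_nat 1)
  refine tendsto_of_tendsto_of_tendsto_of_le_of_le ?_ tendsto_const_nhds
    (fun k ↦ hlow (k + 1)) (fun k ↦ iRatio_le_one)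
  simpa using tendsto_const_nhds.sub hpow

theorem stmt12 {α : Type*} [Fintype α] [Nonempty α] (G : SimpleGraph α)
    (h : 1/2 < aRatio G) :
    Tendsto (fun k : ℕ => iRatio (tensorPow G (k + 1))) atTop (nhds 1) :=
  stmt12_general G h
end
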